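/- arXiv:2107.10032 — 4 statements merged into one kernel-verified Lean document; each statement's English description precedes it below -/
import Mathlib

section
/- Let 𝒢 be a finite graph of groups with finite vertex groups on a finite connected graph Γ, with maximal spanning tree T and orientation Ē(Γ). Let W be a finite-dimensional complex Hilbert space and suppose that for each vertex v ∈ V(Γ) we are given a unitary representation ρ_v: G_v → U(W) such that for every edge e ∈ E(Γ) the G_e-representations ρ_{t(e)}∘i_e and ρ_{o(e)}∘i_ē are unitarily equivalent. Then there exists a unitary representation ρ: π₁(𝒢,T) → U(W) such that for every vertex v the G_v-representation obtained by composing ρ with the natural homomorphism G_v → π₁(𝒢,T) is unitarily equivalent to ρ_v. -/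
open scoped BigOperators

/-- The normalized `p`-Schatten norm of a square complex matrix:
`‖A‖'_p = (tr(|A|^p) / dim W)^(1/p)`, computed via the eigenvalues of `Aᴴ * A`
(whose `p/2`-th powers are the `p`-th powers of the singular values of `A`). -/
noncomputable def schattenNorm (p : ℝ) {ι : Type*} [Fintype ι] [DecidableEq ι]
    (A : Matrix ι ι ℂ) : ℝ :=
  ((∑ i, (Matrix.isHermitian_conjTranspose_mul_self A).eigenvalues i ^ (p / 2)) /
      (Fintype.card ι)) ^ (1 / p)

/-- A finite graph in the sense of Serre: finite sets of vertices and of (oriented)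
edges, a terminus map `t`, and a fixed-point-free involution `e ↦ ē`. The origin of
an edge is defined by `o e = t ē`. -/
structure SerreGraph where
  V : Type
  E : Type
  [fintypeV : Fintype V]
  [fintypeE : Fintype E]
  t : E → V
  bar : E → E
  bar_involutive : Function.Involutive bar
  bar_ne : ∀ e, bar e ≠ e

attribute [instance] SerreGraph.fintypeV SerreGraph.fintypeE

namespace SerreGraph

/-- The origin of an edge: `o e = t ē`. -/
def o (Γ : SerreGraph) (e : Γ.E) : Γ.V := Γ.t (Γ.bar e)

/-- Reachability between vertices using only edges from the subset `Esub`. -/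
def Reaches (Γ : SerreGraph) (Esub : Set Γ.E) : Γ.V → Γ.V → Prop :=
  Relation.ReflTransGen (fun u v => ∃ e ∈ Esub, Γ.o e = u ∧ Γ.t e = v)

/-- The graph is connected. -/
def Connected (Γ : SerreGraph) : Prop := ∀ u v, Γ.Reaches Set.univ u v

/-- `O ⊆ E` is an orientation: it contains exactly one of each pair `{e, ē}`. -/
def IsOrientation (Γ : SerreGraph) (O : Set Γ.E) : Prop :=
  ∀ e, e ∈ O ↔ Γ.bar e ∉ O

/-- `T ⊆ E` is a maximal (= spanning) tree: closed under the involution, connecting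
any two vertices, and with exactly `|V| - 1` geometric edges (each counted twice). -/
def IsSpanningTree (Γ : SerreGraph) (T : Set Γ.E) : Prop :=
  (∀ e ∈ T, Γ.bar e ∈ T) ∧ (∀ u v, Γ.Reaches T u v) ∧
    Nat.card T = 2 * (Fintype.card Γ.V - 1)

end SerreGraph

/-- A finite graph of groups with finite vertex (and edge) groups on the graph `Γ`:
finite groups `Gv v` and `Ge e`, the identification `G_e = G_ē` (an involutive system
of isomorphisms `eqv e : Ge e ≃* Ge ē`), and injective homomorphisms
`i e : Ge e →* Gv (t e)`. -/
structure GraphOfGroups (Γ : SerreGraph) where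
  Gv : Γ.V → Type
  Ge : Γ.E → Type
  [groupGv : ∀ v, Group (Gv v)]
  [fintypeGv : ∀ v, Fintype (Gv v)]
  [groupGe : ∀ e, Group (Ge e)]
  [fintypeGe : ∀ e, Fintype (Ge e)]
  eqv : ∀ e, Ge e ≃* Ge (Γ.bar e)
  eqv_bar : ∀ (e : Γ.E) (g : Ge e),
    eqv (Γ.bar e) (eqv e g) = cast (congrArg Ge (Γ.bar_involutive e)).symm g
  i : ∀ e, Ge e →* Gv (Γ.t e)
  i_inj : ∀ e, Function.Injective (i e)

attribute [instance] GraphOfGroups.groupGv GraphOfGroups.fintypeGv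
  GraphOfGroups.groupGe GraphOfGroups.fintypeGe

namespace GraphOfGroups

variable {Γ : SerreGraph} (𝒢 : GraphOfGroups Γ)

/-- The edge map towards the origin vertex: `i_ē` composed with `G_e = G_ē`. -/
def iBar (e : Γ.E) : 𝒢.Ge e →* 𝒢.Gv (Γ.o e) :=
  (𝒢.i (Γ.bar e)).comp (𝒢.eqv e).toMonoidHom

/-- The group `π̄₁(𝒢,T)`: the free product of the vertex groups with the free group
on the edges of the orientation `O`. -/
def PiBar (O : Set Γ.E) : Type :=
  Monoid.Coprod (Monoid.CoprodI 𝒢.Gv) (FreeGroup O)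

instance (O : Set Γ.E) : Group (𝒢.PiBar O) :=
  inferInstanceAs (Group (Monoid.Coprod (Monoid.CoprodI 𝒢.Gv) (FreeGroup O)))

/-- The canonical embedding of the vertex group `Gv v` into `π̄₁(𝒢,T)`. -/
def vert (O : Set Γ.E) (v : Γ.V) : 𝒢.Gv v →* 𝒢.PiBar O :=
  Monoid.Coprod.inl.comp Monoid.CoprodI.of

/-- The generator `s_e` of `π̄₁(𝒢,T)` corresponding to an oriented edge `e ∈ O`. -/
def edgeGen (O : Set Γ.E) (e : Γ.E) (he : e ∈ O) : 𝒢.PiBar O :=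
  Monoid.Coprod.inr (FreeGroup.of (⟨e, he⟩ : O))

open Classical in
/-- The element `s_e` of `π̄₁(𝒢,T)` for an arbitrary edge: `s_e` for `e` in the
orientation, and `s_ē⁻¹` otherwise. -/
noncomputable def sgen (O : Set Γ.E) (e : Γ.E) : 𝒢.PiBar O :=
  if h : e ∈ O then 𝒢.edgeGen O e h
  else if h' : Γ.bar e ∈ O then (𝒢.edgeGen O (Γ.bar e) h')⁻¹ else 1

/-- The relation set `R_𝒢 ⊆ π̄₁(𝒢,T)`: the generators `s_e` for oriented edges of the
spanning tree `T`, and `s_e⁻¹ i_e(g) s_e (i_ē(g))⁻¹` for all oriented edges `e` and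
`g ∈ G_e`. -/
def Rels (O T : Set Γ.E) : Set (𝒢.PiBar O) :=
  {x | ∃ (e : Γ.E) (he : e ∈ O), e ∈ T ∧ x = 𝒢.edgeGen O e he} ∪
  {x | ∃ (e : Γ.E) (he : e ∈ O) (g : 𝒢.Ge e),
    x = (𝒢.edgeGen O e he)⁻¹ * 𝒢.vert O (Γ.t e) (𝒢.i e g) * 𝒢.edgeGen O e he
        * (𝒢.vert O (Γ.o e) (𝒢.iBar e g))⁻¹}

/-- The generating set `S_𝒢 ⊆ π̄₁(𝒢,T)`: the union of the vertex groups and of the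
generators `s_e`, `e ∈ Ē(Γ)`. -/
def Gens (O : Set Γ.E) : Set (𝒢.PiBar O) :=
  (⋃ v : Γ.V, Set.range (𝒢.vert O v)) ∪
    {x | ∃ (e : Γ.E) (he : e ∈ O), x = 𝒢.edgeGen O e he}

/-- The fundamental group `π₁(𝒢,T)` of the graph of groups: the quotient of
`π̄₁(𝒢,T)` by the normal closure of the relation set `R_𝒢`. -/
def Pi1 (O T : Set Γ.E) : Type :=
  𝒢.PiBar O ⧸ Subgroup.normalClosure (𝒢.Rels O T)

instance (O T : Set Γ.E) : Group (𝒢.Pi1 O T) :=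
  inferInstanceAs (Group (𝒢.PiBar O ⧸ Subgroup.normalClosure (𝒢.Rels O T)))

/-- The natural epimorphism `π̄₁(𝒢,T) → π₁(𝒢,T)`. -/
def proj (O T : Set Γ.E) : 𝒢.PiBar O →* 𝒢.Pi1 O T :=
  QuotientGroup.mk' (Subgroup.normalClosure (𝒢.Rels O T))

/-- `ρ : π̄₁(𝒢,T) → U(n)` is a `δ`-almost `π₁(𝒢,T)`-representation if
`‖ρ(r) - I‖'_p < δ` for every `r ∈ R_𝒢`. -/
def IsAlmostRepG (p : ℝ) (O T : Set Γ.E) (δ : ℝ) {n : ℕ}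
    (ρ : 𝒢.PiBar O →* Matrix.unitaryGroup (Fin n) ℂ) : Prop :=
  ∀ r ∈ 𝒢.Rels O T, schattenNorm p ((ρ r : Matrix (Fin n) (Fin n) ℂ) - 1) < δ

end GraphOfGroups

/-- Two unitary representations of a group on the same space are unitarily
equivalent if some unitary matrix intertwines them. -/
def UnitarilyEquivalent {G : Type*} [Group G] {n : ℕ}
    (ρ₁ ρ₂ : G →* Matrix.unitaryGroup (Fin n) ℂ) : Prop :=
  ∃ U : Matrix.unitaryGroup (Fin n) ℂ,
    ∀ g, (U : Matrix (Fin n) (Fin n) ℂ) * (ρ₁ g : Matrix (Fin n) (Fin n) ℂ)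
      = (ρ₂ g : Matrix (Fin n) (Fin n) ℂ) * (U : Matrix (Fin n) (Fin n) ℂ)

/-!
Choose unitaries `U e` intertwining `ρ_{t e} ∘ i_e` with `ρ_{o e} ∘ i_ē`, with `U ē = (U e)⁻¹`.
Because `T` is a tree, the equations `A (t e) = (U e)⁻¹ * A (o e)` (`e ∈ T`) have a solution
`A : V → U(n)`: root `T`, define `A` along parent edges, and note that the parent edges and
their reverses already number `2 (|V| - 1) = |T|`. Replacing `ρ_v` by the equivalent
`A_v⁻¹ ρ_v A_v` and sending `s_e ↦ A_{t e}⁻¹ (U e)⁻¹ A_{o e}` kills the tree generators and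
satisfies the edge relations, so it defines a representation of `π₁(𝒢,T)`.
-/

theorem exists_eq_mul_comp_of_depth_lt {V G : Type*} [Group G] {r : V} (q : {v // v ≠ r} → V)
    (d : V → ℕ) (hd : ∀ v, d (q v) < d v) (c : {v // v ≠ r} → G) :
    ∃ f : V → G, ∀ v : {v // v ≠ r}, f v = c v * f (q v) := by
  classical
  refine ⟨(measure d).wf.fix fun v rec =>
    if h : v = r then 1 else c ⟨v, h⟩ * rec (q ⟨v, h⟩) (hd ⟨v, h⟩), fun ⟨v, hv⟩ => ?_⟩
  rw [WellFounded.fix_eq, dif_neg hv]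

namespace SerreGraph

variable (Γ : SerreGraph)

def ReachesIn (T : Set Γ.E) (r : Γ.V) : ℕ → Γ.V → Prop
  | 0 => fun v => v = r
  | k + 1 => fun v => ∃ e ∈ T, Γ.t e = v ∧ ReachesIn T r k (Γ.o e)

variable {Γ} {T : Set Γ.E}

theorem exists_reachesIn_of_reaches {r v : Γ.V} (h : Γ.Reaches T r v) :
    ∃ k, Γ.ReachesIn T r k v := by
  induction h with
  | refl => exact ⟨0, rfl⟩
  | tail _ hstep ih =>
    obtain ⟨k, hk⟩ := ih
    obtain ⟨e, heT, rfl, rfl⟩ := hstep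
    exact ⟨k + 1, e, heT, rfl, hk⟩

/-- Breadth-first search: `d v` is the length of a shortest `T`-path from `r` to `v`, and
`p v` is its last edge. -/
theorem exists_parent_edge {r : Γ.V} (hreach : ∀ v, Γ.Reaches T r v) :
    ∃ (d : Γ.V → ℕ) (p : {v // v ≠ r} → Γ.E),
      ∀ v, p v ∈ T ∧ Γ.t (p v) = v ∧ d (Γ.o (p v)) + 1 = d v := by
  classical
  have hex v := exists_reachesIn_of_reaches (hreach v)
  have hstep : ∀ v ≠ r,
      ∃ e ∈ T, Γ.t e = v ∧ Nat.find (hex (Γ.o e)) + 1 = Nat.find (hex v) := by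
    intro v hv
    have hspec := Nat.find_spec (hex v)
    obtain ⟨k, hk⟩ : ∃ k, Nat.find (hex v) = k + 1 :=
      Nat.exists_eq_succ_of_ne_zero fun h0 => hv (by simpa [h0, ReachesIn] using hspec)
    rw [hk] at hspec
    obtain ⟨e, heT, hte, hre⟩ := hspec
    refine ⟨e, heT, hte, le_antisymm ?_ ?_⟩
    · have := Nat.find_le (h := hex (Γ.o e)) hre; omega
    · exact hk ▸ Nat.find_le (h := hex v) (n := _ + 1)
        ⟨e, heT, hte, Nat.find_spec (hex (Γ.o e))⟩
  choose p hp using fun v : {v // v ≠ r} => hstep v v.2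
  exact ⟨fun v => Nat.find (hex v), p, hp⟩

/-- A spanning tree has exactly twice as many edges as non-root vertices, so the parent
edges and their reverses, being pairwise distinct, exhaust it. -/
theorem IsSpanningTree.exists_eq_parent_or_eq_bar_parent (hT : Γ.IsSpanningTree T) {r : Γ.V}
    {d : Γ.V → ℕ} {p : {v // v ≠ r} → Γ.E}
    (hp : ∀ v, p v ∈ T ∧ Γ.t (p v) = v ∧ d (Γ.o (p v)) + 1 = d v) {e : Γ.E} (he : e ∈ T) :
    ∃ v, e = p v ∨ e = Γ.bar (p v) := by
  classical
  let φ : Bool × {v // v ≠ r} → T := fun x =>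
    bif x.1 then ⟨p x.2, (hp x.2).1⟩ else ⟨Γ.bar (p x.2), hT.1 _ (hp x.2).1⟩
  have hp_inj : Function.Injective p := fun v w h =>
    Subtype.ext <| ((hp v).2.1.symm.trans (congrArg Γ.t h)).trans (hp w).2.1
  have hp_ne_bar (v w) : p v ≠ Γ.bar (p w) := by
    intro h
    have hov : Γ.o (p v) = w := by rw [h, o, Γ.bar_involutive, (hp w).2.1]
    have how : Γ.o (p w) = v := by rw [← (hp v).2.1, h]; rfl
    have hv := (hp v).2.2
    have hw := (hp w).2.2
    rw [hov] at hv
    rw [how] at hw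
    omega
  have hφ : Function.Injective φ := by
    rintro ⟨_ | _, v⟩ ⟨_ | _, w⟩ h <;> simp only [φ, cond_true, cond_false, Subtype.mk.injEq] at h
    · rw [hp_inj (Γ.bar_involutive.injective h)]
    · exact absurd h.symm (hp_ne_bar w v)
    · exact absurd h (hp_ne_bar v w)
    · rw [hp_inj h]
  have hcard : Nat.card T ≤ Nat.card (Bool × {v // v ≠ r}) := by
    rw [hT.2.2, Nat.card_prod, Nat.card_eq_fintype_card (α := Bool), Fintype.card_bool,
      Nat.card_eq_fintype_card, Fintype.card_subtype_compl, Fintype.card_subtype_eq]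
  obtain ⟨⟨_ | _, v⟩, hv⟩ := (hφ.bijective_of_nat_card_le hcard).2 ⟨e, he⟩
  · exact ⟨v, .inr (congrArg Subtype.val hv).symm⟩
  · exact ⟨v, .inl (congrArg Subtype.val hv).symm⟩

theorem IsSpanningTree.exists_potential (hT : Γ.IsSpanningTree T) {G : Type*} [Group G]
    (U : Γ.E → G) (hU : ∀ e, U (Γ.bar e) = (U e)⁻¹) :
    ∃ f : Γ.V → G, ∀ e ∈ T, f (Γ.t e) = (U e)⁻¹ * f (Γ.o e) := by
  rcases isEmpty_or_nonempty Γ.V with _ | ⟨⟨r⟩⟩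
  · exact ⟨1, fun e _ => isEmptyElim (Γ.t e)⟩
  obtain ⟨d, p, hp⟩ := exists_parent_edge (hT.2.1 r)
  obtain ⟨f, hf⟩ := exists_eq_mul_comp_of_depth_lt (fun v => Γ.o (p v)) d
    (fun v => by have := (hp v).2.2; omega) fun v => (U (p v))⁻¹
  refine ⟨f, fun e he => ?_⟩
  obtain ⟨v, rfl | rfl⟩ := hT.exists_eq_parent_or_eq_bar_parent hp he
  · rw [(hp v).2.1, hf v]
  · rw [o, Γ.bar_involutive, (hp v).2.1, hU, inv_inv, hf v, mul_inv_cancel_left]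
    rfl

theorem IsOrientation.exists_inv_bar_extension {O : Set Γ.E} (hO : Γ.IsOrientation O)
    {H : Type*} [Group H] {P : Γ.E → H → Prop} (hP : ∀ e ∈ O, ∃ u, P e u) :
    ∃ U : Γ.E → H, (∀ e, U (Γ.bar e) = (U e)⁻¹) ∧ ∀ e ∈ O, P e (U e) := by
  classical
  choose! u hu using hP
  refine ⟨fun e => if e ∈ O then u e else (u (Γ.bar e))⁻¹, fun e => ?_,
    fun e he => by simpa only [if_pos he] using hu e he⟩
  by_cases he : e ∈ O
  · simp only [if_neg ((hO e).1 he), if_pos he, Γ.bar_involutive e]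
  · simp only [if_pos (not_not.1 (mt (hO e).2 he)), if_neg he, inv_inv]

end SerreGraph

namespace GraphOfGroups

variable {Γ : SerreGraph} (𝒢 : GraphOfGroups Γ) {O T : Set Γ.E}

theorem exists_pi1_hom_comp_vert {H : Type*} [Group H] (φ : ∀ v, 𝒢.Gv v →* H) (x : Γ.E → H)
    (htree : ∀ e ∈ O, e ∈ T → x e = 1)
    (hedge : ∀ e ∈ O, ∀ g, (x e)⁻¹ * φ (Γ.t e) (𝒢.i e g) * x e = φ (Γ.o e) (𝒢.iBar e g)) :
    ∃ ψ : 𝒢.Pi1 O T →* H, ∀ v, ψ.comp ((𝒢.proj O T).comp (𝒢.vert O v)) = φ v := by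
  let Φ : 𝒢.PiBar O →* H :=
    Monoid.Coprod.lift (Monoid.CoprodI.lift φ) (FreeGroup.lift fun e => x e)
  have hvert v g : Φ (𝒢.vert O v g) = φ v g :=
    (Monoid.Coprod.lift_apply_inl _ _ _).trans (Monoid.CoprodI.lift_of _ _)
  have hedgeGen e he : Φ (𝒢.edgeGen O e he) = x e :=
    (Monoid.Coprod.lift_apply_inr _ _ _).trans (FreeGroup.lift_apply_of ..)
  have hrels : 𝒢.Rels O T ⊆ Φ.ker := by
    rintro _ (⟨e, he, heT, rfl⟩ | ⟨e, he, g, rfl⟩) <;> rw [SetLike.mem_coe, MonoidHom.mem_ker]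
    · rw [hedgeGen, htree e he heT]
    · rw [map_mul, map_mul, map_mul, map_inv, map_inv, hedgeGen, hvert, hvert, hedge e he,
        mul_inv_cancel]
  exact ⟨QuotientGroup.lift _ Φ (Subgroup.normalClosure_le_normal hrels),
    fun v => MonoidHom.ext (hvert v)⟩

end GraphOfGroups

theorem unitarilyEquivalent_iff {G : Type*} [Group G] {n : ℕ}
    (ρ₁ ρ₂ : G →* Matrix.unitaryGroup (Fin n) ℂ) :
    UnitarilyEquivalent ρ₁ ρ₂ ↔ ∃ U, ∀ g, U * ρ₁ g * U⁻¹ = ρ₂ g := by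
  simp only [UnitarilyEquivalent, mul_inv_eq_iff_eq_mul, Subtype.ext_iff,
    Submonoid.coe_mul]

theorem rep_of_vertex_reps_general
    (Γ : SerreGraph) (𝒢 : GraphOfGroups Γ)
    (O T : Set Γ.E) (hO : Γ.IsOrientation O) (hT : Γ.IsSpanningTree T)
    (n : ℕ) (ρv : ∀ v : Γ.V, 𝒢.Gv v →* Matrix.unitaryGroup (Fin n) ℂ)
    (hcompat : ∀ e : Γ.E, UnitarilyEquivalent
      ((ρv (Γ.t e)).comp (𝒢.i e)) ((ρv (Γ.o e)).comp (𝒢.iBar e))) :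
    ∃ ρ : 𝒢.Pi1 O T →* Matrix.unitaryGroup (Fin n) ℂ,
      ∀ v : Γ.V, UnitarilyEquivalent
        (ρ.comp ((𝒢.proj O T).comp (𝒢.vert O v))) (ρv v) := by
  obtain ⟨U, hU_bar, hU⟩ :=
    hO.exists_inv_bar_extension fun e _ => (unitarilyEquivalent_iff _ _).1 (hcompat e)
  simp only [MonoidHom.comp_apply] at hU
  obtain ⟨A, hA⟩ := hT.exists_potential U hU_bar
  obtain ⟨ψ, hψ⟩ := 𝒢.exists_pi1_hom_comp_vert (O := O) (T := T)
    (fun v => (MulAut.conj (A v)⁻¹).toMonoidHom.comp (ρv v))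
    (fun e => (A (Γ.t e))⁻¹ * (U e)⁻¹ * A (Γ.o e))
    (fun e _ heT => by rw [hA e heT]; group)
    (fun e he g => by
      simp only [MonoidHom.comp_apply, MulEquiv.coe_toMonoidHom, MulAut.conj_apply, inv_inv]
      rw [← hU e he g]
      group)
  refine ⟨ψ, fun v => (unitarilyEquivalent_iff _ _).2 ⟨A v, fun g => ?_⟩⟩
  simp only [hψ, MonoidHom.comp_apply, MulEquiv.coe_toMonoidHom, MulAut.conj_apply, inv_inv]
  group

/-- If unitary representations `ρ_v` of the vertex groups of a finite graph of
groups (on a common finite-dimensional space) are compatible along all edges up to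
unitary equivalence, then there is a unitary representation of `π₁(𝒢,T)` whose
restriction to each vertex group is unitarily equivalent to `ρ_v`. -/
theorem rep_of_vertex_reps
    (Γ : SerreGraph) (hconn : Γ.Connected) (𝒢 : GraphOfGroups Γ)
    (O T : Set Γ.E) (hO : Γ.IsOrientation O) (hT : Γ.IsSpanningTree T)
    (n : ℕ) (ρv : ∀ v : Γ.V, 𝒢.Gv v →* Matrix.unitaryGroup (Fin n) ℂ)
    (hcompat : ∀ e : Γ.E, UnitarilyEquivalent
      ((ρv (Γ.t e)).comp (𝒢.i e)) ((ρv (Γ.o e)).comp (𝒢.iBar e))) :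
    ∃ ρ : 𝒢.Pi1 O T →* Matrix.unitaryGroup (Fin n) ℂ,
      ∀ v : Γ.V, UnitarilyEquivalent
        (ρ.comp ((𝒢.proj O T).comp (𝒢.vert O v))) (ρv v) :=
  rep_of_vertex_reps_general Γ 𝒢 O T hO hT n ρv hcompat
end

section
/- Let A and B be finite sets, let w: A → ℤ_{>0} and u: B → ℤ_{>0} be weights defining norms ||x|| = Σ_{a∈A} w(a)·|x(a)| on ℤ^A and ||y|| = Σ_{b∈B} u(b)·|y(b)| on ℤ^B, and let f: ℤ^A → ℤ^B be a ℤ-linear map. Then there exists a constant C > 0 (depending only on A, B, w, u, f) such that for every λ ∈ ℤ^A with λ(a) ≥ 0 for all a ∈ A, there exists λ'' ∈ ℤ^A with λ''(a) ≥ 0 for all a ∈ A, f(λ'') = 0, ||λ − λ''|| ≤ C·||f(λ)||, and ||λ''|| ≤ ||λ||. -/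
/-!
Split `λ = λ'' + r` with `λ''` a maximal nonnegative element of `ker f` below `λ`: then no
nonzero nonnegative kernel vector lies below `r`, and it remains to bound `‖r‖ ≤ C ‖f r‖` for
such `r`. If no such `C` existed, there would be such `rₙ` with `‖rₙ‖ > n ‖f rₙ‖`; normalised
onto the standard simplex, a subsequence converges to a nonnegative real kernel vector `x₀`,
and `rₙ` tends to infinity on the support of `x₀`. Because `f` is defined over `ℤ`, some
nonzero nonnegative integer kernel vector `μ` is supported in the support of `x₀`, so
eventually `μ ≤ rₙ`: a contradiction.
-/

open Filter Topology Matrix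

section

variable {A B : Type*} [Fintype A]

theorem exists_pos_sum_mul_le_mul_sum {ι : Type*} [Fintype ι] (w : ι → ℝ) :
    ∃ W > 0, ∀ x : ι → ℝ, 0 ≤ x → ∑ i, w i * x i ≤ W * ∑ i, x i := by
  refine ⟨1 + ∑ i, |w i|, by positivity, fun x hx => ?_⟩
  rw [Finset.mul_sum]
  refine Finset.sum_le_sum fun i _ => mul_le_mul_of_nonneg_right ?_ (hx i)
  exact (le_abs_self _).trans <| le_add_of_nonneg_of_le zero_le_one <|
    Finset.single_le_sum (f := fun i => |w i|) (fun i _ => abs_nonneg _) (Finset.mem_univ i)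

def IsKernelFree {β : Type*} [Zero β] (f : (A → ℤ) → β) (r : A → ℤ) : Prop :=
  ∀ μ, 0 ≤ μ → μ ≤ r → f μ = 0 → μ = 0

theorem exists_le_map_eq_zero_isKernelFree_sub {F G : Type*} [AddZeroClass G]
    [FunLike F (A → ℤ) G] [AddMonoidHomClass F (A → ℤ) G] (f : F) {l : A → ℤ}
    (hl : 0 ≤ l) :
    ∃ ν, 0 ≤ ν ∧ ν ≤ l ∧ f ν = 0 ∧ IsKernelFree f (l - ν) := by
  classical
  obtain ⟨ν, hν, hmax⟩ := ((Finset.Icc 0 l).filter (f · = 0)).exists_max_image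
    (fun ν => ∑ a, ν a) ⟨0, by simp [hl]⟩
  simp only [Finset.mem_filter, Finset.mem_Icc] at hν hmax
  obtain ⟨⟨hν0, hνl⟩, hfν⟩ := hν
  refine ⟨ν, hν0, hνl, hfν, fun μ hμ0 hμle hfμ => ?_⟩
  have hsum : ∑ a, μ a ≤ 0 := by
    have := hmax (ν + μ) ⟨⟨add_nonneg hν0 hμ0, le_sub_iff_add_le'.1 hμle⟩, by
      rw [map_add, hfν, hfμ, add_zero]⟩
    simpa [Finset.sum_add_distrib] using this
  funext a
  exact (Finset.sum_eq_zero_iff_of_nonneg fun a _ => hμ0 a).1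
    (hsum.antisymm (Finset.sum_nonneg fun a _ => hμ0 a)) a (Finset.mem_univ a)

theorem map_intCast_mulVec {R : Type*} [Ring R] [Fintype B] (M : Matrix B A ℤ) (z : A → ℤ) :
    M.map (↑) *ᵥ (fun a => (z a : R)) = fun b => ((M *ᵥ z) b : R) :=
  funext fun b => (RingHom.map_mulVec (Int.castRingHom R) M z b).symm

theorem exists_int_mulVec_eq_zero_of_real [Fintype B] (M : Matrix B A ℤ) {x : A → ℝ}
    (hx : x ≠ 0) (hMx : M.map (↑) *ᵥ x = 0) :
    ∃ z : A → ℤ, z ≠ 0 ∧ M *ᵥ z = 0 ∧ ∀ a, x a = 0 → z a = 0 := by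
  classical
  set S := Function.support x
  -- `x` is a real dependence among the columns of `M` indexed by `S`, so there is an integer one.
  have hdep : ¬LinearIndependent ℝ fun a : S => algebraMap ℤ ℝ ∘ Mᵀ a := by
    rw [Fintype.linearIndependent_iff]
    push Not
    refine ⟨fun a => x a, ?_, ?_⟩
    · ext b
      have := congrFun hMx b
      simp only [mulVec, dotProduct, map_apply] at this
      rw [Finset.sum_congr_set S _ (fun a : S => (M b a : ℝ) * x a) (fun _ _ => rfl)
        (fun a ha => by simp [Function.notMem_support.1 ha])] at this
      simpa [mul_comm] using this
    · obtain ⟨a, ha⟩ := Function.ne_iff.1 hx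
      exact ⟨⟨a, ha⟩, ha⟩
  rw [linearIndependent_algebraMap_comp_iff, Fintype.linearIndependent_iff] at hdep
  push Not at hdep
  obtain ⟨g, hg, a₀, ha₀⟩ := hdep
  refine ⟨fun a => if h : a ∈ S then g ⟨a, h⟩ else 0, ?_, ?_, ?_⟩
  · exact Function.ne_iff.2 ⟨a₀, by simpa using ha₀⟩
  · ext b
    have := congrFun hg b
    simp only [mulVec, dotProduct]
    rw [Finset.sum_congr_set S _ (fun a : S => M b a * g a) (fun a ha => by simp [ha])
      (fun a ha => by simp [ha])]
    simpa [mul_comm] using this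
  · intro a ha
    simp [S, ha]

theorem exists_nonneg_sub_smul_eq_zero (x z : A → ℝ) (hx : 0 ≤ x) (hz : ∃ a, 0 < z a) :
    ∃ t : ℝ, 0 ≤ t ∧ 0 ≤ x - t • z ∧ ∃ a, z a ≠ 0 ∧ (x - t • z) a = 0 := by
  classical
  obtain ⟨a₀, ha₀, hmin⟩ := (Finset.univ.filter (0 < z ·)).exists_min_image
    (fun a => x a / z a) (by simpa [Finset.filter_nonempty_iff] using hz)
  simp only [Finset.mem_filter, Finset.mem_univ, true_and] at ha₀ hmin
  refine ⟨x a₀ / z a₀, div_nonneg (hx a₀) ha₀.le, fun a => ?_, a₀, ha₀.ne', ?_⟩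
  · rcases lt_or_ge 0 (z a) with hza | hza
    · simpa [← le_div_iff₀ hza] using hmin a hza
    · simpa using (mul_nonpos_of_nonneg_of_nonpos (div_nonneg (hx a₀) ha₀.le) hza).trans (hx a)
  · simp [div_mul_cancel₀ _ ha₀.ne']

theorem exists_nonneg_int_mulVec_eq_zero_of_real [Fintype B] (M : Matrix B A ℤ) {x : A → ℝ}
    (hx0 : 0 ≤ x) (hx : x ≠ 0) (hMx : M.map (↑) *ᵥ x = 0) :
    ∃ μ : A → ℤ, 0 ≤ μ ∧ μ ≠ 0 ∧ M *ᵥ μ = 0 ∧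
      ∀ a, x a = 0 → μ a = 0 := by
  induction hn : (Function.support x).ncard using Nat.strong_induction_on generalizing x with
  | _ n ih =>
  obtain ⟨z, hz, hMz, hzx⟩ := exists_int_mulVec_eq_zero_of_real M hx hMx
  wlog hpos : ∃ a, 0 < z a generalizing z
  · refine this (-z) (neg_ne_zero.2 hz) (by simp [mulVec_neg, hMz]) (by simpa using hzx) ?_
    push Not at hpos
    obtain ⟨a, ha⟩ := Function.ne_iff.1 hz
    exact ⟨a, neg_pos.2 (lt_of_le_of_ne (hpos a) ha)⟩
  -- Subtracting a multiple of `z` kills a coordinate of `x`, unless `x` is a multiple of `z`.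
  obtain ⟨t, ht, hx'0, a₀, hza₀, hx'a₀⟩ :=
    exists_nonneg_sub_smul_eq_zero x (fun a => (z a : ℝ)) hx0 (by exact_mod_cast hpos)
  set x' := x - t • fun a => (z a : ℝ)
  have hMx' : M.map (↑) *ᵥ x' = 0 := by
    rw [mulVec_sub, mulVec_smul, hMx, map_intCast_mulVec, hMz]
    ext; simp
  have hx'x : ∀ a, x a = 0 → x' a = 0 := fun a ha => by simp [x', ha, hzx a ha]
  by_cases hx' : x' = 0
  · have htpos : 0 < t := by
      refine ht.lt_of_ne fun h => hx ?_
      simpa [x', ← h] using hx'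
    refine ⟨z, fun a => ?_, hz, hMz, hzx⟩
    have htz : t * z a = x a := by simpa [x', sub_eq_zero, eq_comm] using congrFun hx' a
    have : (0 : ℝ) ≤ t * z a := htz ▸ hx0 a
    exact_mod_cast (mul_nonneg_iff_of_pos_left htpos).1 this
  · have hlt : (Function.support x').ncard < n := by
      rw [← hn]
      refine Set.ncard_lt_ncard ⟨fun a ha h => ha (hx'x a h), ?_⟩ (Set.toFinite _)
      rw [Set.not_subset]
      exact ⟨a₀, fun h => hza₀ (by exact_mod_cast hzx a₀ h), by simpa using hx'a₀⟩
    obtain ⟨μ, hμ0, hμ, hMμ, hμx'⟩ := ih _ hlt hx'0 hx' hMx' rfl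
    exact ⟨μ, hμ0, hμ, hMμ, fun a ha => hμx' a (hx'x a ha)⟩

theorem one_le_sum_abs_intCast [Fintype B] {v : B → ℤ} (hv : v ≠ 0) :
    1 ≤ ∑ b, |(v b : ℝ)| := by
  obtain ⟨b, hb⟩ := Function.ne_iff.1 hv
  calc (1 : ℝ) ≤ |(v b : ℝ)| := by exact_mod_cast Int.one_le_abs hb
    _ ≤ ∑ b, |(v b : ℝ)| :=
      Finset.single_le_sum (f := fun b => |(v b : ℝ)|) (fun b _ => abs_nonneg _)
        (Finset.mem_univ b)

theorem exists_mulVec_eq_zero_subseq_tendsto_atTop [Fintype B] (M : Matrix B A ℤ)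
    {r : ℕ → A → ℤ} (hr0 : ∀ n, 0 ≤ r n) (hpos : ∀ n, 0 < ∑ a, (r n a : ℝ))
    (hs : Tendsto (fun n => ∑ a, (r n a : ℝ)) atTop atTop)
    (hM : Tendsto (fun n => (∑ b, |((M *ᵥ r n) b : ℝ)|) / ∑ a, (r n a : ℝ))
      atTop (𝓝 0)) :
    ∃ x₀ ∈ stdSimplex ℝ A, M.map (↑) *ᵥ x₀ = 0 ∧
      ∃ φ : ℕ → ℕ, ∀ a, 0 < x₀ a →
        Tendsto (fun n => (r (φ n) a : ℝ)) atTop atTop := by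
  set s : ℕ → ℝ := fun n => ∑ a, (r n a : ℝ)
  have hspos : ∀ n, 0 < s n := hpos
  set x : ℕ → A → ℝ := fun n => (s n)⁻¹ • fun a => (r n a : ℝ)
  have hx : ∀ n, x n ∈ stdSimplex ℝ A := fun n =>
    ⟨fun a => mul_nonneg (inv_nonneg.2 (hspos n).le) (Int.cast_nonneg (hr0 n a)), by
      simp only [x, Pi.smul_apply, smul_eq_mul, ← Finset.mul_sum]
      exact inv_mul_cancel₀ (hspos n).ne'⟩
  obtain ⟨x₀, hx₀, φ, hφ, hlim⟩ := (isCompact_stdSimplex ℝ A).tendsto_subseq hx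
  set g : (A → ℝ) → ℝ := fun y => ∑ b, |(M.map (↑) *ᵥ y) b|
  have hgx : ∀ n, g (x n) = (∑ b, |((M *ᵥ r n) b : ℝ)|) / s n := fun n => by
    simp only [g, x, mulVec_smul, map_intCast_mulVec, Pi.smul_apply, smul_eq_mul, abs_mul,
      abs_inv, ← Finset.mul_sum]
    rw [abs_of_pos (hspos n), div_eq_inv_mul]
  have hg0 : g x₀ = 0 :=
    tendsto_nhds_unique ((Continuous.tendsto (by fun_prop) x₀).comp hlim)
      (by simpa only [Function.comp_def, hgx] using hM.comp hφ.tendsto_atTop)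
  refine ⟨x₀, hx₀, funext fun b => abs_eq_zero.1 ?_, φ, fun a ha => ?_⟩
  · exact (Finset.sum_eq_zero_iff_of_nonneg fun b _ => abs_nonneg _).1 hg0 b
      (Finset.mem_univ b)
  · refine ((tendsto_pi_nhds.1 hlim a).pos_mul_atTop ha (hs.comp hφ.tendsto_atTop)).congr
      fun n => ?_
    simp only [Function.comp_apply, x, Pi.smul_apply, smul_eq_mul]
    rw [mul_comm, ← mul_assoc, mul_inv_cancel₀ (hspos (φ n)).ne', one_mul]

theorem exists_sum_le_mul_sum_abs_mulVec [Fintype B] (M : Matrix B A ℤ) :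
    ∃ C : ℝ, 0 < C ∧ ∀ r : A → ℤ, 0 ≤ r → IsKernelFree (M *ᵥ ·) r →
      ∑ a, (r a : ℝ) ≤ C * ∑ b, |((M *ᵥ r) b : ℝ)| := by
  by_contra! h
  choose r hr0 hfree hlt using fun n : ℕ => h (n + 1) n.cast_add_one_pos
  set s : ℕ → ℝ := fun n => ∑ a, (r n a : ℝ)
  set N : ℕ → ℝ := fun n => ∑ b, |((M *ᵥ r n) b : ℝ)|
  have hN : ∀ n, 1 ≤ N n := fun n => one_le_sum_abs_intCast fun h0 => by
    simpa [hfree n (r n) (hr0 n) le_rfl h0] using hlt n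
  have hs : ∀ n : ℕ, (n : ℝ) + 1 < s n := fun n => by nlinarith [hlt n, hN n]
  have hspos : ∀ n, 0 < s n := fun n => by linarith [hs n, n.cast_nonneg (α := ℝ)]
  have hNs : Tendsto (fun n => N n / s n) atTop (𝓝 0) := by
    refine squeeze_zero (fun n => div_nonneg (by linarith [hN n]) (hspos n).le) (fun n => ?_)
      tendsto_one_div_add_atTop_nhds_zero_nat
    rw [div_le_div_iff₀ (hspos n) n.cast_add_one_pos]
    linarith [hlt n]
  obtain ⟨x₀, hx₀, hker, φ, hlim⟩ := exists_mulVec_eq_zero_subseq_tendsto_atTop M hr0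
    hspos (tendsto_atTop_mono (fun n => by linarith [hs n]) tendsto_natCast_atTop_atTop) hNs
  obtain ⟨μ, hμ0, hμ, hMμ, hμx⟩ := exists_nonneg_int_mulVec_eq_zero_of_real M hx₀.1
    (fun h0 => by simpa [h0] using hx₀.2) hker
  have hev : ∀ a, ∀ᶠ n in atTop, μ a ≤ r (φ n) a := fun a => by
    rcases (hx₀.1 a).eq_or_lt with ha | ha
    · exact Eventually.of_forall fun n => (hμx a ha.symm).symm ▸ hr0 (φ n) a
    · exact ((hlim a ha).eventually_ge_atTop (μ a : ℝ)).mono fun n hn => by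
        exact_mod_cast hn
  obtain ⟨n, hn⟩ := (eventually_all.2 hev).exists
  exact hμ (hfree (φ n) μ hμ0 hn hMμ)

end

/-- The cone lemma of Lazarovich–Levitt: given finite sets `A, B`, positive integer
weights `w, u` defining weighted `ℓ¹`-norms on `ℤ^A` and `ℤ^B`, and a `ℤ`-linear map
`f : ℤ^A → ℤ^B`, there is a constant `C > 0` such that every non-negative `λ ∈ ℤ^A`
admits a non-negative `λ'' ∈ ℤ^A` with `f(λ'') = 0`, `‖λ - λ''‖ ≤ C·‖f(λ)‖` and
`‖λ''‖ ≤ ‖λ‖`. -/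
theorem cone_lemma (A B : Type) [Fintype A] [Fintype B]
    (w : A → ℤ) (u : B → ℤ) (hw : ∀ a, 0 < w a) (hu : ∀ b, 0 < u b)
    (f : (A → ℤ) →ₗ[ℤ] (B → ℤ)) :
    ∃ C : ℝ, 0 < C ∧
      ∀ lam : A → ℤ, (∀ a, 0 ≤ lam a) →
        ∃ lam'' : A → ℤ, (∀ a, 0 ≤ lam'' a) ∧ f lam'' = 0 ∧
          ((∑ a, w a * |lam a - lam'' a| : ℤ) : ℝ)
              ≤ C * ((∑ b, u b * |f lam b| : ℤ) : ℝ) ∧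
          (∑ a, w a * |lam'' a|) ≤ (∑ a, w a * |lam a|) := by
  classical
  obtain ⟨C, hC, hbound⟩ := exists_sum_le_mul_sum_abs_mulVec (LinearMap.toMatrix' f)
  simp only [LinearMap.toMatrix'_mulVec] at hbound
  obtain ⟨W, hW, hwW⟩ := exists_pos_sum_mul_le_mul_sum fun a => (w a : ℝ)
  refine ⟨W * C, mul_pos hW hC, fun lam hlam => ?_⟩
  obtain ⟨lam'', h0, hle, hker, hfree⟩ :=
    exists_le_map_eq_zero_isKernelFree_sub f (show 0 ≤ lam from hlam)
  have hr0 : 0 ≤ lam - lam'' := sub_nonneg.2 hle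
  have hr := hbound (lam - lam'') hr0 hfree
  rw [map_sub, hker, sub_zero] at hr
  refine ⟨lam'', h0, hker, ?_, Finset.sum_le_sum fun a _ => ?_⟩
  · calc ((∑ a, w a * |lam a - lam'' a| : ℤ) : ℝ)
        = ∑ a, (w a : ℝ) * ((lam - lam'') a : ℤ) := by
          simp only [abs_of_nonneg (sub_nonneg.2 (hle _)), Int.cast_sum, Int.cast_mul, Pi.sub_apply]
      _ ≤ W * ∑ a, (((lam - lam'') a : ℤ) : ℝ) := hwW _ fun a => Int.cast_nonneg (hr0 a)
      _ ≤ W * (C * ∑ b, |(f lam b : ℝ)|) := by gcongr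
      _ ≤ W * C * ((∑ b, u b * |f lam b| : ℤ) : ℝ) := by
          push_cast
          rw [mul_assoc]
          gcongr with b
          exact le_mul_of_one_le_left (abs_nonneg _) (by exact_mod_cast hu b)
  · rw [abs_of_nonneg (h0 a), abs_of_nonneg (hlam a)]
    exact mul_le_mul_of_nonneg_left (hle a) (hw a).le
end

section
/- Let 1 ≤ p < ∞ and let G₁ and G₂ be finitely presented groups, each stable with respect to the normalized p-Schatten norm. Then the free product G₁ ∗ G₂ is stable with respect to the normalized p-Schatten norm. -/
/-!
An almost representation of `G₁ ∗ G₂` restricts, on the generators of each factor, to an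
almost representation of that factor. Stability of the factors yields nearby genuine
representations `ρ₁'` and `ρ₂'`, and the universal property of the free product glues them
into a representation `Monoid.Coprod.lift ρ₁' ρ₂'` which is close to the original one on
every generator, since each generator of `G₁ ∗ G₂` comes from one of the factors.
-/

open scoped BigOperators

/-- `ρ : F_S → U(n)` is a `δ`-almost `G`-representation for the presentation with
relation set `R` if `‖ρ(r) - I‖'_p < δ` for all `r ∈ R`. -/
def IsAlmostRep (p : ℝ) {S : Type*} (R : Finset (FreeGroup S)) (δ : ℝ)
    {n : ℕ} (ρ : FreeGroup S →* Matrix.unitaryGroup (Fin n) ℂ) : Prop :=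
  ∀ r ∈ R, schattenNorm p ((ρ r : Matrix (Fin n) (Fin n) ℂ) - 1) < δ

/-- Stability of the group `G`, presented via `π : F_S → G` with relation set `R`,
with respect to the normalized `p`-Schatten norm. -/
def PresStable (p : ℝ) {G : Type*} [Group G] {S : Type*}
    (R : Finset (FreeGroup S)) (π : FreeGroup S →* G) : Prop :=
  ∀ ε > (0 : ℝ), ∃ δ > (0 : ℝ),
    ∀ (n : ℕ) (ρ : FreeGroup S →* Matrix.unitaryGroup (Fin n) ℂ),
      IsAlmostRep p R δ ρ →
      ∃ ρ' : G →* Matrix.unitaryGroup (Fin n) ℂ,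
        ∀ s : S, schattenNorm p ((ρ (FreeGroup.of s) : Matrix (Fin n) (Fin n) ℂ)
          - (ρ' (π (FreeGroup.of s)) : Matrix (Fin n) (Fin n) ℂ)) < ε

namespace IsAlmostRep

variable {p : ℝ} {S T : Type*} {n : ℕ} {δ : ℝ}

theorem mono {R : Finset (FreeGroup S)} {δ' : ℝ}
    {ρ : FreeGroup S →* Matrix.unitaryGroup (Fin n) ℂ} (hρ : IsAlmostRep p R δ ρ)
    (hδ : δ ≤ δ') : IsAlmostRep p R δ' ρ :=
  fun r hr => (hρ r hr).trans_le hδ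

theorem comp_map {R : Finset (FreeGroup S)} {R' : Finset (FreeGroup T)}
    {ρ : FreeGroup T →* Matrix.unitaryGroup (Fin n) ℂ} (hρ : IsAlmostRep p R' δ ρ)
    (f : S → T) (hR : ∀ r ∈ R, FreeGroup.map f r ∈ R') :
    IsAlmostRep p R δ (ρ.comp (FreeGroup.map f)) :=
  fun r hr => hρ _ (hR r hr)

end IsAlmostRep

open scoped Classical in
theorem free_product_pSchatten_stable_general (p : ℝ)
    (G₁ G₂ : Type) [Group G₁] [Group G₂]
    (S₁ S₂ : Type)
    (R₁ : Finset (FreeGroup S₁)) (R₂ : Finset (FreeGroup S₂))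
    (π₁ : FreeGroup S₁ →* G₁) (π₂ : FreeGroup S₂ →* G₂)
    (hstab₁ : PresStable p R₁ π₁) (hstab₂ : PresStable p R₂ π₂) :
    PresStable p
      ((R₁.image (FreeGroup.map (Sum.inl : S₁ → S₁ ⊕ S₂))) ∪
        (R₂.image (FreeGroup.map (Sum.inr : S₂ → S₁ ⊕ S₂))))
      (FreeGroup.lift (Sum.elim
        (fun s₁ => (Monoid.Coprod.inl : G₁ →* Monoid.Coprod G₁ G₂) (π₁ (FreeGroup.of s₁)))
        (fun s₂ => (Monoid.Coprod.inr : G₂ →* Monoid.Coprod G₁ G₂) (π₂ (FreeGroup.of s₂))))) := by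
  intro ε hε
  obtain ⟨δ₁, hδ₁, h₁⟩ := hstab₁ ε hε
  obtain ⟨δ₂, hδ₂, h₂⟩ := hstab₂ ε hε
  refine ⟨min δ₁ δ₂, lt_min hδ₁ hδ₂, fun n ρ hρ => ?_⟩
  obtain ⟨ρ₁', hρ₁'⟩ := h₁ n _ <| (hρ.comp_map Sum.inl fun _ hr =>
    Finset.mem_union_left _ (Finset.mem_image_of_mem _ hr)).mono (min_le_left _ _)
  obtain ⟨ρ₂', hρ₂'⟩ := h₂ n _ <| (hρ.comp_map Sum.inr fun _ hr =>
    Finset.mem_union_right _ (Finset.mem_image_of_mem _ hr)).mono (min_le_right _ _)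
  refine ⟨Monoid.Coprod.lift ρ₁' ρ₂', ?_⟩
  rintro (s₁ | s₂)
  · simpa using hρ₁' s₁
  · simpa using hρ₂' s₂

open scoped Classical in
/-- Stability with respect to the normalized `p`-Schatten norm is preserved by free
products: if `G₁ = ⟨S₁ | R₁⟩` and `G₂ = ⟨S₂ | R₂⟩` are stable, then
`G₁ ∗ G₂ = ⟨S₁ ⊔ S₂ | R₁ ∪ R₂⟩` is stable, for `1 ≤ p < ∞`. -/
theorem free_product_pSchatten_stable (p : ℝ) (hp : 1 ≤ p)
    (G₁ G₂ : Type) [Group G₁] [Group G₂]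
    (S₁ S₂ : Type) [Fintype S₁] [Fintype S₂]
    (R₁ : Finset (FreeGroup S₁)) (R₂ : Finset (FreeGroup S₂))
    (π₁ : FreeGroup S₁ →* G₁) (π₂ : FreeGroup S₂ →* G₂)
    (hsurj₁ : Function.Surjective π₁) (hsurj₂ : Function.Surjective π₂)
    (hker₁ : π₁.ker = Subgroup.normalClosure (R₁ : Set (FreeGroup S₁)))
    (hker₂ : π₂.ker = Subgroup.normalClosure (R₂ : Set (FreeGroup S₂)))
    (hstab₁ : PresStable p R₁ π₁) (hstab₂ : PresStable p R₂ π₂) :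
    PresStable p
      ((R₁.image (FreeGroup.map (Sum.inl : S₁ → S₁ ⊕ S₂))) ∪
        (R₂.image (FreeGroup.map (Sum.inr : S₂ → S₁ ⊕ S₂))))
      (FreeGroup.lift (Sum.elim
        (fun s₁ => (Monoid.Coprod.inl : G₁ →* Monoid.Coprod G₁ G₂) (π₁ (FreeGroup.of s₁)))
        (fun s₂ => (Monoid.Coprod.inr : G₂ →* Monoid.Coprod G₁ G₂) (π₂ (FreeGroup.of s₂))))) :=
  free_product_pSchatten_stable_general p G₁ G₂ S₁ S₂ R₁ R₂ π₁ π₂ hstab₁ hstab₂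
end

section
/- Let 1 ≤ p < ∞, let Ḡ be a group, let N ⊴ Ḡ be a normal subgroup, let G = Ḡ/N and let φ: Ḡ → G be the quotient map. Let S₁, S₂ be finite generating sets of Ḡ and let R₁, R₂ ⊆ Ḡ be finite sets each of which normally generates N. If φ is stable with respect to the normalized p-Schatten norm relative to the pair (S₁, R₁), then φ is stable with respect to the normalized p-Schatten norm relative to the pair (S₂, R₂). -/
open scoped BigOperators

/-- For `R ⊆ Ḡ` a set normally generating the kernel of `φ : Ḡ → G`, a homomorphism
`ρ : Ḡ → U(n)` is a `δ`-almost `G`-representation if `‖ρ(r) - I‖'_p < δ` for all `r ∈ R`. -/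
def IsAlmostRepOf (p : ℝ) {Gbar : Type*} [Group Gbar] (R : Finset Gbar) (δ : ℝ)
    {n : ℕ} (ρ : Gbar →* Matrix.unitaryGroup (Fin n) ℂ) : Prop :=
  ∀ r ∈ R, schattenNorm p ((ρ r : Matrix (Fin n) (Fin n) ℂ) - 1) < δ

/-- Stability of the epimorphism `φ : Ḡ → G` with respect to the normalized
`p`-Schatten norm, relative to the finite generating set `S` of `Ḡ` and the finite
set `R ⊆ Ḡ` normally generating `ker φ`. -/
def EpiStable (p : ℝ) {Gbar G : Type*} [Group Gbar] [Group G]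
    (S R : Finset Gbar) (phi : Gbar →* G) : Prop :=
  ∀ ε > (0 : ℝ), ∃ δ > (0 : ℝ),
    ∀ (n : ℕ) (ρ : Gbar →* Matrix.unitaryGroup (Fin n) ℂ),
      IsAlmostRepOf p R δ ρ →
      ∃ ρ' : G →* Matrix.unitaryGroup (Fin n) ℂ,
        ∀ s ∈ S, schattenNorm p ((ρ s : Matrix (Fin n) (Fin n) ℂ)
          - (ρ' (phi s) : Matrix (Fin n) (Fin n) ℂ)) < ε

/-!
For unitaries `u, v` the normalized Frobenius distance `‖u - v‖'_2` is bi-invariant and satisfies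
the triangle inequality, so for homomorphisms `ρ, σ : Ḡ → U(n)` the function
`g ↦ ‖ρ g - σ g‖'_2` is a group seminorm on `Ḡ`, conjugation invariant when `σ = 1`. Writing the
elements of `S₂` as words in `S₁`, and those of `R₁` as products of conjugates of elements of
`R₂` and their inverses, smallness therefore transfers from `S₁` to `S₂` and from `R₂` to `R₁`,
with losses depending only on the word lengths and not on `n`. Since `u - v` has singular values
at most `2`, all normalized Schatten norms of `u - v` are small together, uniformly in `n`; this
moves both transfers from `p = 2` to arbitrary `p`.
-/

open Matrix

universe u

namespace GroupSeminorm

variable {G : Type*} [Group G]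

theorem exists_le_mul_of_mem_closure {S : Set G} {g : G} (hg : g ∈ Subgroup.closure S) :
    ∃ k : ℕ, ∀ (f : GroupSeminorm G) (e : ℝ), (∀ s ∈ S, f s ≤ e) → f g ≤ k * e := by
  induction hg using Subgroup.closure_induction with
  | mem s hs => exact ⟨1, fun f e hf => by simpa using hf s hs⟩
  | one => exact ⟨0, fun f e _ => by simp⟩
  | mul x y _ _ hx hy =>
    obtain ⟨k, hk⟩ := hx
    obtain ⟨l, hl⟩ := hy
    refine ⟨k + l, fun f e hf => ?_⟩
    calc f (x * y) ≤ f x + f y := map_mul_le_add f x y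
      _ ≤ k * e + l * e := add_le_add (hk f e hf) (hl f e hf)
      _ = (k + l : ℕ) * e := by push_cast; ring
  | inv x _ hx =>
    obtain ⟨k, hk⟩ := hx
    exact ⟨k, fun f e hf => by simpa only [map_inv_eq_map] using hk f e hf⟩

theorem exists_forall_lt_of_subset_closure {S : Set G} {T : Finset G}
    (hT : (T : Set G) ⊆ Subgroup.closure S) {ε : ℝ} (hε : 0 < ε) :
    ∃ δ > 0, ∀ f : GroupSeminorm G, (∀ s ∈ S, f s < δ) → ∀ t ∈ T, f t < ε := by
  choose! k hk using fun t (ht : t ∈ T) => exists_le_mul_of_mem_closure (hT ht)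
  have hK : (0 : ℝ) < T.sup k + 1 := by positivity
  refine ⟨ε / (T.sup k + 1), by positivity, fun f hf t ht => ?_⟩
  calc f t ≤ k t * (ε / (T.sup k + 1)) := hk t ht f _ fun s hs => (hf s hs).le
    _ ≤ T.sup k * (ε / (T.sup k + 1)) := by gcongr; exact Finset.le_sup ht
    _ < ε := by rw [mul_div_assoc', div_lt_iff₀ hK]; linarith

theorem exists_forall_lt_of_subset_normalClosure {R : Set G} {T : Finset G}
    (hT : (T : Set G) ⊆ Subgroup.normalClosure R) {ε : ℝ} (hε : 0 < ε) :
    ∃ δ > 0, ∀ f : GroupSeminorm G, (∀ c x, f (c * x * c⁻¹) = f x) →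
      (∀ r ∈ R, f r < δ) → ∀ t ∈ T, f t < ε := by
  obtain ⟨δ, hδ, hsmall⟩ := exists_forall_lt_of_subset_closure hT hε
  refine ⟨δ, hδ, fun f hconj hR => hsmall f fun x hx => ?_⟩
  obtain ⟨r, hr, hrx⟩ := Group.mem_conjugatesOfSet_iff.mp hx
  obtain ⟨c, rfl⟩ := isConj_iff.mp hrx
  exact (hconj c r).trans_lt (hR r hr)

end GroupSeminorm

theorem sum_rpow_div_card_le_rpow {ι : Type*} [Fintype ι] {t : ι → ℝ} (ht : ∀ i, 0 ≤ t i)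
    {θ : ℝ} (hθ₀ : 0 ≤ θ) (hθ₁ : θ ≤ 1) :
    (∑ i, t i ^ θ) / Fintype.card ι ≤ ((∑ i, t i) / Fintype.card ι) ^ θ := by
  cases isEmpty_or_nonempty ι
  · simpa using Real.rpow_nonneg le_rfl θ
  have hcard : (0 : ℝ) < Fintype.card ι := by exact_mod_cast Fintype.card_pos
  have h := (Real.concaveOn_rpow hθ₀ hθ₁).le_map_sum (t := Finset.univ)
    (w := fun _ => (Fintype.card ι : ℝ)⁻¹) (p := t) (fun _ _ => by positivity)
    (by simp [hcard.ne']) (fun i _ => ht i)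
  simp only [smul_eq_mul] at h
  rwa [← Finset.mul_sum, ← Finset.mul_sum, inv_mul_eq_div, inv_mul_eq_div] at h

theorem exists_sum_rpow_div_card_lt {a b M ε : ℝ} (ha : 0 < a) (hb : 0 < b) (hM : 0 < M)
    (hε : 0 < ε) :
    ∃ δ > 0, ∀ {ι : Type u} [Fintype ι] (t : ι → ℝ), (∀ i, 0 ≤ t i) → (∀ i, t i ≤ M) →
      (∑ i, t i ^ b) / Fintype.card ι < δ → (∑ i, t i ^ a) / Fintype.card ι < ε := by
  rcases le_or_gt b a with hba | hab
  · refine ⟨ε / M ^ (a - b), by positivity, fun {ι} _ t ht₀ htM hδ => ?_⟩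
    have hpt : ∀ i, t i ^ a ≤ M ^ (a - b) * t i ^ b := fun i => by
      rw [show a = (a - b) + b by ring, Real.rpow_add' (ht₀ i) (by linarith), add_sub_cancel_right]
      exact mul_le_mul_of_nonneg_right (Real.rpow_le_rpow (ht₀ i) (htM i) (by linarith))
        (Real.rpow_nonneg (ht₀ i) _)
    calc (∑ i, t i ^ a) / Fintype.card ι
        ≤ (∑ i, M ^ (a - b) * t i ^ b) / Fintype.card ι := by gcongr with i; exact hpt i
      _ = M ^ (a - b) * ((∑ i, t i ^ b) / Fintype.card ι) := by rw [← Finset.mul_sum, mul_div_assoc]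
      _ < M ^ (a - b) * (ε / M ^ (a - b)) := by gcongr
      _ = ε := by field_simp
  · refine ⟨ε ^ (b / a), by positivity, fun {ι} _ t ht₀ _ hδ => ?_⟩
    have hpow : ∀ i, t i ^ a = (t i ^ b) ^ (a / b) := fun i => by
      rw [← Real.rpow_mul (ht₀ i), mul_div_cancel₀ _ hb.ne']
    calc (∑ i, t i ^ a) / Fintype.card ι = (∑ i, (t i ^ b) ^ (a / b)) / Fintype.card ι := by
          simp only [hpow]
      _ ≤ ((∑ i, t i ^ b) / Fintype.card ι) ^ (a / b) :=
          sum_rpow_div_card_le_rpow (fun i => Real.rpow_nonneg (ht₀ i) _) (by positivity)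
            ((div_le_one hb).2 hab.le)
      _ < (ε ^ (b / a)) ^ (a / b) := by
          gcongr
          exact div_nonneg (Finset.sum_nonneg fun i _ => Real.rpow_nonneg (ht₀ i) _) (by positivity)
      _ = ε := by
          rw [← Real.rpow_mul hε.le, div_mul_div_comm, mul_comm b a, div_self (by positivity),
            Real.rpow_one]

section L2Operator

open scoped Matrix.Norms.L2Operator

variable {ι : Type*} [Fintype ι] [DecidableEq ι]

theorem Matrix.eigenvalues_conjTranspose_mul_self_le_sq_norm (A : Matrix ι ι ℂ) (i : ι) :
    (isHermitian_conjTranspose_mul_self A).eigenvalues i ≤ ‖A‖ ^ 2 := by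
  have : Nonempty ι := ⟨i⟩
  have hmem := (isHermitian_conjTranspose_mul_self A).eigenvalues_mem_spectrum_real i
  rw [← spectrum.algebraMap_mem_iff ℂ] at hmem
  have h := spectrum.norm_le_norm_of_mem hmem
  rw [l2_opNorm_conjTranspose_mul_self, Complex.coe_algebraMap, Complex.norm_real] at h
  rw [sq]
  exact (le_abs_self _).trans h

theorem Matrix.UnitaryGroup.norm_sub_le_two (u v : unitaryGroup ι ℂ) :
    ‖(u : Matrix ι ι ℂ) - (v : Matrix ι ι ℂ)‖ ≤ 2 := by
  cases isEmpty_or_nonempty ι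
  · simp [Subsingleton.elim ((u : Matrix ι ι ℂ) - v) 0]
  · calc ‖(u : Matrix ι ι ℂ) - v‖ ≤ ‖(u : Matrix ι ι ℂ)‖ + ‖(v : Matrix ι ι ℂ)‖ := norm_sub_le _ _
      _ = 2 := by rw [CStarRing.norm_coe_unitary u, CStarRing.norm_coe_unitary v]; norm_num

theorem Matrix.UnitaryGroup.eigenvalues_conjTranspose_mul_self_sub_le_four
    (u v : unitaryGroup ι ℂ) (i : ι) :
    (isHermitian_conjTranspose_mul_self ((u : Matrix ι ι ℂ) - (v : Matrix ι ι ℂ))).eigenvalues i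
      ≤ 4 :=
  calc _ ≤ ‖(u : Matrix ι ι ℂ) - (v : Matrix ι ι ℂ)‖ ^ 2 :=
        eigenvalues_conjTranspose_mul_self_le_sq_norm _ i
    _ ≤ 2 ^ 2 := by gcongr; exact norm_sub_le_two u v
    _ = 4 := by norm_num

end L2Operator

theorem schattenNorm_lt_iff {ι : Type*} [Fintype ι] [DecidableEq ι] {p ε : ℝ} (hp : 0 < p)
    (hε : 0 ≤ ε) (A : Matrix ι ι ℂ) :
    schattenNorm p A < ε ↔
      (∑ i, (isHermitian_conjTranspose_mul_self A).eigenvalues i ^ (p / 2)) / Fintype.card ι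
        < ε ^ p := by
  rw [schattenNorm, one_div]
  exact Real.rpow_inv_lt_iff_of_pos (div_nonneg (Finset.sum_nonneg fun i _ => Real.rpow_nonneg
    (eigenvalues_conjTranspose_mul_self_nonneg A i) _) (Nat.cast_nonneg _)) hε hp

theorem exists_schattenNorm_unitary_sub_lt {p q ε : ℝ} (hp : 0 < p) (hq : 0 < q) (hε : 0 < ε) :
    ∃ δ > 0, ∀ {ι : Type u} [Fintype ι] [DecidableEq ι] (u v : unitaryGroup ι ℂ),
      schattenNorm q ((u : Matrix ι ι ℂ) - (v : Matrix ι ι ℂ)) < δ →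
        schattenNorm p ((u : Matrix ι ι ℂ) - (v : Matrix ι ι ℂ)) < ε := by
  obtain ⟨δ, hδ, hsmall⟩ := exists_sum_rpow_div_card_lt.{u} (half_pos hp) (half_pos hq) four_pos
    (Real.rpow_pos_of_pos hε p)
  refine ⟨δ ^ q⁻¹, by positivity, fun {ι} _ _ u v huv => ?_⟩
  rw [schattenNorm_lt_iff hq (by positivity), ← Real.rpow_mul hδ.le, inv_mul_cancel₀ hq.ne',
    Real.rpow_one] at huv
  rw [schattenNorm_lt_iff hp hε.le]
  exact hsmall _ (eigenvalues_conjTranspose_mul_self_nonneg _)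
    (UnitaryGroup.eigenvalues_conjTranspose_mul_self_sub_le_four u v) huv

section Frobenius

attribute [local instance] Matrix.frobeniusNormedAddCommGroup

variable {ι : Type*} [Fintype ι]

theorem Matrix.frobenius_norm_sq_eq_re_trace (A : Matrix ι ι ℂ) :
    ‖A‖ ^ 2 = (Aᴴ * A).trace.re := by
  rw [frobenius_norm_def, ← Real.sqrt_eq_rpow, Real.sq_sqrt (by positivity), Finset.sum_comm]
  simp only [Real.rpow_ofNat, Complex.sq_norm, Complex.normSq_apply, trace, diag_apply, mul_apply,
    conjTranspose_apply, RCLike.star_def, Complex.re_sum, Complex.mul_re, Complex.conj_re,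
    Complex.conj_im, neg_mul, sub_neg_eq_add]

variable [DecidableEq ι]

theorem Matrix.frobenius_norm_unitary_mul (U : unitaryGroup ι ℂ) (A : Matrix ι ι ℂ) :
    ‖(U : Matrix ι ι ℂ) * A‖ = ‖A‖ := by
  have hUA : ((U : Matrix ι ι ℂ) * A)ᴴ * ((U : Matrix ι ι ℂ) * A) = Aᴴ * A := by
    rw [conjTranspose_mul, Matrix.mul_assoc, ← Matrix.mul_assoc _ _ A,
      ← star_eq_conjTranspose (U : Matrix ι ι ℂ), Unitary.coe_star_mul_self, Matrix.one_mul]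
  rw [← sq_eq_sq₀ (norm_nonneg _) (norm_nonneg _), frobenius_norm_sq_eq_re_trace,
    frobenius_norm_sq_eq_re_trace, hUA]

theorem Matrix.frobenius_norm_mul_unitary (A : Matrix ι ι ℂ) (U : unitaryGroup ι ℂ) :
    ‖A * (U : Matrix ι ι ℂ)‖ = ‖A‖ := by
  rw [← frobenius_norm_conjTranspose, conjTranspose_mul,
    ← star_eq_conjTranspose (U : Matrix ι ι ℂ), ← Unitary.coe_star, frobenius_norm_unitary_mul,
    frobenius_norm_conjTranspose]

theorem Matrix.IsHermitian.sum_eigenvalues_eq_re_trace {A : Matrix ι ι ℂ} (hA : A.IsHermitian) :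
    ∑ i, hA.eigenvalues i = A.trace.re := by
  simp [hA.trace_eq_sum_eigenvalues, Complex.re_sum]

theorem schattenNorm_two_eq (A : Matrix ι ι ℂ) :
    schattenNorm 2 A = ‖A‖ / √(Fintype.card ι) := by
  rw [schattenNorm, div_self two_ne_zero, ← Real.sqrt_eq_rpow]
  simp only [Real.rpow_one, IsHermitian.sum_eigenvalues_eq_re_trace,
    ← frobenius_norm_sq_eq_re_trace]
  rw [Real.sqrt_div (sq_nonneg _), Real.sqrt_sq (norm_nonneg _)]

theorem schattenNorm_two_zero : schattenNorm 2 (0 : Matrix ι ι ℂ) = 0 := by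
  simp [schattenNorm_two_eq]

theorem schattenNorm_two_add_le (A B : Matrix ι ι ℂ) :
    schattenNorm 2 (A + B) ≤ schattenNorm 2 A + schattenNorm 2 B := by
  simp only [schattenNorm_two_eq, ← add_div]
  gcongr
  exact norm_add_le A B

theorem schattenNorm_two_neg (A : Matrix ι ι ℂ) : schattenNorm 2 (-A) = schattenNorm 2 A := by
  simp only [schattenNorm_two_eq, norm_neg]

theorem schattenNorm_two_unitary_mul (U : unitaryGroup ι ℂ) (A : Matrix ι ι ℂ) :
    schattenNorm 2 ((U : Matrix ι ι ℂ) * A) = schattenNorm 2 A := by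
  simp only [schattenNorm_two_eq, frobenius_norm_unitary_mul]

theorem schattenNorm_two_mul_unitary (A : Matrix ι ι ℂ) (U : unitaryGroup ι ℂ) :
    schattenNorm 2 (A * (U : Matrix ι ι ℂ)) = schattenNorm 2 A := by
  simp only [schattenNorm_two_eq, frobenius_norm_mul_unitary]

end Frobenius

section SchattenTwoDist

variable (ι : Type*) [Fintype ι] [DecidableEq ι]

noncomputable def Matrix.UnitaryGroup.schattenTwoDist :
    GroupSeminorm (unitaryGroup ι ℂ × unitaryGroup ι ℂ) where
  toFun x := schattenNorm 2 ((x.1 : Matrix ι ι ℂ) - (x.2 : Matrix ι ι ℂ))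
  map_one' := by simp [schattenNorm_two_zero]
  mul_le' x y := by
    have h : ((x * y).1 : Matrix ι ι ℂ) - ((x * y).2 : Matrix ι ι ℂ) =
        (x.1 : Matrix ι ι ℂ) * ((y.1 : Matrix ι ι ℂ) - y.2) +
          ((x.1 : Matrix ι ι ℂ) - x.2) * (y.2 : Matrix ι ι ℂ) := by
      simp only [Prod.fst_mul, Prod.snd_mul, Submonoid.coe_mul, mul_sub, sub_mul]
      abel
    rw [h, add_comm]
    refine (schattenNorm_two_add_le _ _).trans_eq ?_
    rw [schattenNorm_two_unitary_mul, schattenNorm_two_mul_unitary]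
  inv' x := by
    have h : ((x⁻¹).1 : Matrix ι ι ℂ) - ((x⁻¹).2 : Matrix ι ι ℂ) =
        (x.1⁻¹ : unitaryGroup ι ℂ) * -((x.1 : Matrix ι ι ℂ) - x.2) *
          (x.2⁻¹ : unitaryGroup ι ℂ) := by
      simp only [Prod.fst_inv, Prod.snd_inv, neg_sub, mul_sub, sub_mul, UnitaryGroup.inv_val,
        Matrix.mul_assoc, SetLike.coe_mem, Unitary.mul_star_self_of_mem,
        Unitary.star_mul_self_of_mem, Matrix.mul_one, Matrix.one_mul]
    simp only [h, schattenNorm_two_unitary_mul, schattenNorm_two_mul_unitary, schattenNorm_two_neg]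

variable {ι}

theorem Matrix.UnitaryGroup.schattenTwoDist_apply (x : unitaryGroup ι ℂ × unitaryGroup ι ℂ) :
    schattenTwoDist ι x = schattenNorm 2 ((x.1 : Matrix ι ι ℂ) - (x.2 : Matrix ι ι ℂ)) :=
  rfl

theorem Matrix.UnitaryGroup.schattenTwoDist_conj (w u v : unitaryGroup ι ℂ) :
    schattenTwoDist ι (w * u * w⁻¹, w * v * w⁻¹) = schattenTwoDist ι (u, v) := by
  simp only [schattenTwoDist_apply, Submonoid.coe_mul, ← sub_mul, ← mul_sub,
    schattenNorm_two_unitary_mul, schattenNorm_two_mul_unitary]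

end SchattenTwoDist

theorem epiStable_well_defined_general (p : ℝ) (hp : 1 ≤ p)
    (Gbar : Type) [Group Gbar] (N : Subgroup Gbar) [N.Normal]
    (S₁ S₂ R₁ R₂ : Finset Gbar)
    (hS₁ : Subgroup.closure (S₁ : Set Gbar) = ⊤)
    (hR₁ : Subgroup.normalClosure (R₁ : Set Gbar) = N)
    (hR₂ : Subgroup.normalClosure (R₂ : Set Gbar) = N)
    (h : EpiStable p S₁ R₁ (QuotientGroup.mk' N)) :
    EpiStable p S₂ R₂ (QuotientGroup.mk' N) := by
  intro ε hε
  have hp₀ : 0 < p := by linarith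
  obtain ⟨ε₂, hε₂, hS₂_p⟩ := exists_schattenNorm_unitary_sub_lt hp₀ two_pos hε
  obtain ⟨η₂, hη₂, hS₂_two⟩ := GroupSeminorm.exists_forall_lt_of_subset_closure
    (S := (S₁ : Set Gbar)) (T := S₂) (by simp [hS₁]) hε₂
  obtain ⟨η, hη, hS₁_two⟩ := exists_schattenNorm_unitary_sub_lt two_pos hp₀ hη₂
  obtain ⟨δ₁, hδ₁, hstab⟩ := h η hη
  obtain ⟨δ₁', hδ₁', hR₁_p⟩ := exists_schattenNorm_unitary_sub_lt hp₀ two_pos hδ₁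
  obtain ⟨δ₂, hδ₂, hR₁_two⟩ := GroupSeminorm.exists_forall_lt_of_subset_normalClosure
    (R := (R₂ : Set Gbar)) (T := R₁) (by rw [hR₂, ← hR₁]; exact Subgroup.subset_normalClosure) hδ₁'
  obtain ⟨δ, hδ, hR₂_two⟩ := exists_schattenNorm_unitary_sub_lt two_pos hp₀ hδ₂
  refine ⟨δ, hδ, fun n ρ hρ => ?_⟩
  have hconj (c x : Gbar) : (UnitaryGroup.schattenTwoDist _).comp (ρ.prod 1) (c * x * c⁻¹) =
      (UnitaryGroup.schattenTwoDist _).comp (ρ.prod 1) x := by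
    simpa using UnitaryGroup.schattenTwoDist_conj (ρ c) (ρ x) 1
  obtain ⟨ρ', hρ'⟩ := hstab n ρ fun r hr => hR₁_p (ρ r) 1 <|
    hR₁_two _ hconj (fun r hr => hR₂_two (ρ r) 1 (hρ r hr)) r hr
  exact ⟨ρ', fun s hs => hS₂_p _ _ <| hS₂_two ((UnitaryGroup.schattenTwoDist _).comp
    (ρ.prod (ρ'.comp (QuotientGroup.mk' N)))) (fun s hs => hS₁_two _ _ (hρ' s hs)) s hs⟩

/-- Stability of the epimorphism `φ : Ḡ → G = Ḡ/N` with respect to the normalized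
`p`-Schatten norm is independent of the choice of the finite generating set `S` of `Ḡ`
and of the finite set `R` normally generating `N`. -/
theorem epiStable_well_defined (p : ℝ) (hp : 1 ≤ p)
    (Gbar : Type) [Group Gbar] (N : Subgroup Gbar) [N.Normal]
    (S₁ S₂ R₁ R₂ : Finset Gbar)
    (hS₁ : Subgroup.closure (S₁ : Set Gbar) = ⊤)
    (hS₂ : Subgroup.closure (S₂ : Set Gbar) = ⊤)
    (hR₁ : Subgroup.normalClosure (R₁ : Set Gbar) = N)
    (hR₂ : Subgroup.normalClosure (R₂ : Set Gbar) = N)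
    (h : EpiStable p S₁ R₁ (QuotientGroup.mk' N)) :
    EpiStable p S₂ R₂ (QuotientGroup.mk' N) :=
  epiStable_well_defined_general p hp Gbar N S₁ S₂ R₁ R₂ hS₁ hR₁ hR₂ h
end
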